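/- Let 0 < α < 1 and let B_α be the diagonal matrix diag(α, 1, 1−α) acting on ℝ³. Then the dual cone of the power cone K_α equals the image B_α(K_α) = {B_α·x : x ∈ K_α}. -/

import Mathlib

/-!
Weighted AM-GM, `s ^ α * t ^ (1 - α) ≤ α * s + (1 - α) * t`, is what makes the form
`⟨B_α x, z⟩` nonnegative on `K_α × K_α`. Conversely, testing `y ∈ K_α*` against
`(s, ∓ s ^ α * t ^ (1 - α), t)` gives `|y₁| s ^ α t ^ (1 - α) ≤ y₀ s + y₂ t` for all `s, t ≥ 0`,
and AM-GM is sharp: the infimum of the right side over `s ^ α t ^ (1 - α) = 1` is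
`(y₀/α) ^ α (y₂/(1-α)) ^ (1 - α)`, so `B_α⁻¹ y ∈ K_α`.
-/

open Real

/-- The power cone `K_α = {(x₁,x₂,x₃) : x₁ ≥ 0, x₃ ≥ 0, x₁^α·x₃^(1−α) ≥ |x₂|}`
(real powers are `Real.rpow`). -/
def Kpow (α : ℝ) : Set (Fin 3 → ℝ) :=
  {x | 0 ≤ x 0 ∧ 0 ≤ x 2 ∧ |x 1| ≤ x 0 ^ α * x 2 ^ (1 - α)}

/-- The dual cone of `C ⊆ ℝ³` with respect to the standard inner product. -/
def dualCone (C : Set (Fin 3 → ℝ)) : Set (Fin 3 → ℝ) :=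
  {y | ∀ x ∈ C, 0 ≤ y 0 * x 0 + y 1 * x 1 + y 2 * x 2}

open Filter

lemma nonpos_of_forall_mul_rpow_le {c d α : ℝ} (hα : 0 < α)
    (h : ∀ s : ℝ, 0 ≤ s → c * s ^ α ≤ d) : c ≤ 0 := by
  by_contra! hc
  have hlim : Tendsto (fun s : ℝ => c * s ^ α) atTop atTop :=
    (tendsto_rpow_atTop hα).const_mul_atTop hc
  obtain ⟨s, hs, hds⟩ := ((eventually_ge_atTop 0).and (hlim.eventually_gt_atTop d)).exists
  exact (h s hs).not_gt hds

/-- Sharpness of the weighted AM-GM inequality. -/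
lemma le_rpow_mul_rpow_of_forall_le_weighted_sum {α a b c : ℝ} (hα0 : 0 < α) (hα1 : α < 1)
    (ha : 0 ≤ a) (hb : 0 ≤ b)
    (h : ∀ s t : ℝ, 0 ≤ s → 0 ≤ t → c * (s ^ α * t ^ (1 - α)) ≤ α * a * s + (1 - α) * b * t) :
    c ≤ a ^ α * b ^ (1 - α) := by
  have h1α : 0 < 1 - α := by linarith
  rcases ha.eq_or_lt with rfl | ha
  · rw [zero_rpow hα0.ne', zero_mul]
    refine nonpos_of_forall_mul_rpow_le (d := (1 - α) * b) hα0 fun s hs => ?_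
    simpa using h s 1 hs zero_le_one
  rcases hb.eq_or_lt with rfl | hb
  · rw [zero_rpow h1α.ne', mul_zero]
    refine nonpos_of_forall_mul_rpow_le (d := α * a) h1α fun t ht => ?_
    simpa using h 1 t zero_le_one ht
  -- the infimum is attained at `(s, t) = (b, a)`
  have hab : a * b = a ^ α * b ^ (1 - α) * (b ^ α * a ^ (1 - α)) := by
    calc a * b = a ^ (α + (1 - α)) * b ^ ((1 - α) + α) := by simp
      _ = _ := by rw [rpow_add ha, rpow_add hb]; ring
  refine le_of_mul_le_mul_right ?_ (by positivity : 0 < b ^ α * a ^ (1 - α))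
  calc c * (b ^ α * a ^ (1 - α)) ≤ α * a * b + (1 - α) * b * a := h b a hb.le ha.le
    _ = a ^ α * b ^ (1 - α) * (b ^ α * a ^ (1 - α)) := by rw [← hab]; ring

lemma abs_mul_le_of_mem_dualCone_Kpow {α : ℝ} {y : Fin 3 → ℝ} (hy : y ∈ dualCone (Kpow α))
    {s t : ℝ} (hs : 0 ≤ s) (ht : 0 ≤ t) :
    |y 1| * (s ^ α * t ^ (1 - α)) ≤ y 0 * s + y 2 * t := by
  set g := s ^ α * t ^ (1 - α)
  have hg : 0 ≤ g := by positivity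
  have hplus := hy ![s, g, t] ⟨hs, ht, (abs_of_nonneg hg).le⟩
  have hminus := hy ![s, -g, t] ⟨hs, ht, ((abs_neg g).trans (abs_of_nonneg hg)).le⟩
  simp only [Matrix.cons_val] at hplus hminus
  rw [← abs_of_nonneg hg, ← abs_mul, abs_le]
  constructor <;> linarith

lemma mem_Kpow_of_mem_dualCone_Kpow {α : ℝ} (hα0 : 0 < α) (hα1 : α < 1) {y : Fin 3 → ℝ}
    (hy : y ∈ dualCone (Kpow α)) : ![y 0 / α, y 1, y 2 / (1 - α)] ∈ Kpow α := by
  have h1α : 0 < 1 - α := by linarith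
  have hy0 : 0 ≤ y 0 := by
    have := abs_mul_le_of_mem_dualCone_Kpow hy zero_le_one le_rfl (α := α)
    simp only [mul_one, mul_zero, add_zero] at this
    exact (mul_nonneg (abs_nonneg _) (by positivity)).trans this
  have hy2 : 0 ≤ y 2 := by
    have := abs_mul_le_of_mem_dualCone_Kpow hy le_rfl zero_le_one (α := α)
    simp only [mul_one, mul_zero, zero_add] at this
    exact (mul_nonneg (abs_nonneg _) (by positivity)).trans this
  refine ⟨by simp only [Matrix.cons_val]; positivity, by simp only [Matrix.cons_val]; positivity, ?_⟩
  simp only [Matrix.cons_val]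
  refine le_rpow_mul_rpow_of_forall_le_weighted_sum hα0 hα1 (by positivity) (by positivity)
    fun s t hs ht => ?_
  rw [mul_div_cancel₀ _ hα0.ne', mul_div_cancel₀ _ h1α.ne']
  exact abs_mul_le_of_mem_dualCone_Kpow hy hs ht

lemma mem_dualCone_Kpow_of_mem_Kpow {α : ℝ} (hα0 : 0 ≤ α) (hα1 : α ≤ 1) {x : Fin 3 → ℝ}
    (hx : x ∈ Kpow α) : ![α * x 0, x 1, (1 - α) * x 2] ∈ dualCone (Kpow α) := by
  obtain ⟨hx0, hx2, hx1⟩ := hx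
  rintro z ⟨hz0, hz2, hz1⟩
  simp only [Matrix.cons_val]
  have hprod : |x 1 * z 1| ≤ (x 0 * z 0) ^ α * (x 2 * z 2) ^ (1 - α) :=
    calc |x 1 * z 1| = |x 1| * |z 1| := abs_mul _ _
      _ ≤ (x 0 ^ α * x 2 ^ (1 - α)) * (z 0 ^ α * z 2 ^ (1 - α)) :=
        mul_le_mul hx1 hz1 (abs_nonneg _) (by positivity)
      _ = (x 0 * z 0) ^ α * (x 2 * z 2) ^ (1 - α) := by
        rw [mul_rpow hx0 hz0, mul_rpow hx2 hz2]; ring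
  have hamgm := geom_mean_le_arith_mean2_weighted hα0 (sub_nonneg.2 hα1)
    (mul_nonneg hx0 hz0) (mul_nonneg hx2 hz2) (add_sub_cancel α 1)
  linarith [neg_abs_le (x 1 * z 1)]

/-- For `0 < α < 1`, the dual of the power cone `K_α` is `B_α·K_α`, where
`B_α = diag(α, 1, 1−α)`. -/
theorem dualCone_Kpow (α : ℝ) (hα0 : 0 < α) (hα1 : α < 1) :
    dualCone (Kpow α) =
      (fun x : Fin 3 → ℝ => ![α * x 0, x 1, (1 - α) * x 2]) '' Kpow α := by
  ext y
  constructor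
  · intro hy
    refine ⟨_, mem_Kpow_of_mem_dualCone_Kpow hα0 hα1 hy, ?_⟩
    have h1α : 1 - α ≠ 0 := by linarith
    ext i
    fin_cases i <;> simp [mul_div_cancel₀, hα0.ne', h1α]
  · rintro ⟨x, hx, rfl⟩
    exact mem_dualCone_Kpow_of_mem_Kpow hα0.le hα1.le hx
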